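/- arXiv:1405.2404 — 6 statements merged into one kernel-verified Lean document; each statement's English description precedes it below -/
import Mathlib

section
/- If 0 ≤ a < 1, |a+b| < 1, and the real sequence x satisfies x(k) = a^k x(0) + (∑_{i=0}^{k-1} a^i) b v for a fixed v, with |x(0) - v| ≤ δ and |v| ≤ ((1-|a|)/(1-(a+b))) δ, then |x(k) - v| ≤ δ for all k ≥ 0. -/
theorem stmt_0 (a b δ v x0 : ℝ) (x : ℕ → ℝ)
    (hδ : 0 < δ) (ha0 : 0 ≤ a) (ha1 : a < 1) (hab : |a + b| < 1)
    (hx : ∀ k : ℕ, x k = a ^ k * x0 + b * v * (1 - a ^ k) / (1 - a))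
    (hx0 : |x0 - v| ≤ δ) (hv : |v| ≤ (1 - |a|) / (1 - (a + b)) * δ) :
    ∀ k : ℕ, |x k - v| ≤ δ := by
  intro k
  have ha : (0:ℝ) < 1 - a := by linarith
  have hc : (0:ℝ) < 1 - (a + b) := by
    have h := abs_lt.mp hab; linarith [h.2]
  have hak0 : 0 ≤ a ^ k := pow_nonneg ha0 k
  have hak1 : a ^ k ≤ 1 := pow_le_one₀ ha0 ha1.le
  have hv' : |v| ≤ (1 - a) / (1 - (a + b)) * δ := by
    rwa [abs_of_nonneg ha0] at hv
  have key : x k - v = a ^ k * (x0 - v) - (1 - a ^ k) * ((1 - (a + b)) / (1 - a)) * v := by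
    rw [hx k]; field_simp; ring
  rw [key]
  calc |a ^ k * (x0 - v) - (1 - a ^ k) * ((1 - (a + b)) / (1 - a)) * v|
      ≤ |a ^ k * (x0 - v)| + |(1 - a ^ k) * ((1 - (a + b)) / (1 - a)) * v| := abs_sub _ _
    _ = a ^ k * |x0 - v| + (1 - a ^ k) * ((1 - (a + b)) / (1 - a)) * |v| := by
        rw [abs_mul, abs_mul, abs_of_nonneg hak0, abs_mul, abs_of_nonneg (by linarith : (0:ℝ) ≤ 1 - a ^ k),
          abs_of_nonneg (le_of_lt (div_pos hc ha))]
    _ ≤ a ^ k * δ + (1 - a ^ k) * ((1 - (a + b)) / (1 - a)) * ((1 - a) / (1 - (a + b)) * δ) := by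
        gcongr <;> first | positivity | exact mul_nonneg (by linarith) (div_pos hc ha).le
    _ = δ := by field_simp; ring
end

section
/- If -1 < a < 0, |a+b| < 1, and x(k) = a^k x(0) + b v (1-a^k)/(1-a) for a fixed v with |x(0) - v| ≤ δ and |v| ≤ ((1-|a|)/(1-(a+b))) δ, then |x(k) - v| ≤ δ for all k ≥ 0. -/
/-!
Writing `x k - v = a ^ k * (x0 - v) - (1 - a ^ k) / (1 - a) * ((1 - (a + b)) * v)`, the triangle
inequality bounds `|x k - v|` by `|a| ^ k * δ + (1 - a ^ k) / (1 - a) * (1 - |a|) * δ`. This is at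
most `δ` because `(1 - a ^ k) * (1 - |a|) ≤ (1 - |a| ^ k) * (1 - a)`: an identity for `a ≥ 0`, and for
`a < 0` it reduces to `|a| ^ k ≤ |a|`.
-/

theorem pow_mul_add_geom_sub_eq (a b v x0 : ℝ) (k : ℕ) (ha : 1 - a ≠ 0) :
    a ^ k * x0 + b * v * (1 - a ^ k) / (1 - a) - v =
      a ^ k * (x0 - v) - (1 - a ^ k) / (1 - a) * ((1 - (a + b)) * v) := by
  field_simp
  ring

theorem one_sub_pow_mul_one_sub_abs_le {a : ℝ} (ha : |a| ≤ 1) (k : ℕ) :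
    (1 - a ^ k) * (1 - |a|) ≤ (1 - |a| ^ k) * (1 - a) := by
  rcases le_or_gt 0 a with ha0 | ha0
  · rw [abs_of_nonneg ha0]
  rcases Nat.eq_zero_or_pos k with rfl | hk
  · simp
  have hpow : |a| ^ k ≤ |a| := pow_le_of_le_one (abs_nonneg a) ha hk.ne'
  have hneg : -|a| ^ k ≤ a ^ k := by simpa only [abs_pow] using neg_abs_le (a ^ k)
  rw [abs_of_neg ha0] at ha hpow hneg ⊢
  nlinarith

theorem abs_pow_mul_add_geom_sub_le {a b δ v x0 : ℝ} (ha : |a| < 1) (hab : 0 < 1 - (a + b))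
    (hx0 : |x0 - v| ≤ δ) (hv : |v| ≤ (1 - |a|) / (1 - (a + b)) * δ) (k : ℕ) :
    |a ^ k * x0 + b * v * (1 - a ^ k) / (1 - a) - v| ≤ δ := by
  have hδ : 0 ≤ δ := (abs_nonneg _).trans hx0
  have h1a : 0 < 1 - a := by linarith [le_abs_self a]
  have hak : a ^ k ≤ 1 :=
    (le_abs_self _).trans (by rw [abs_pow]; exact pow_le_one₀ (abs_nonneg a) ha.le)
  have hcoef : 0 ≤ (1 - a ^ k) / (1 - a) := div_nonneg (by linarith) h1a.le
  have hv' : (1 - (a + b)) * |v| ≤ (1 - |a|) * δ := by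
    rw [div_mul_eq_mul_div, le_div_iff₀ hab] at hv
    linarith
  rw [pow_mul_add_geom_sub_eq a b v x0 k h1a.ne']
  calc |a ^ k * (x0 - v) - (1 - a ^ k) / (1 - a) * ((1 - (a + b)) * v)|
      ≤ |a ^ k * (x0 - v)| + |(1 - a ^ k) / (1 - a) * ((1 - (a + b)) * v)| := abs_sub _ _
    _ = |a| ^ k * |x0 - v| + (1 - a ^ k) / (1 - a) * ((1 - (a + b)) * |v|) := by
      rw [abs_mul, abs_mul, abs_mul, abs_pow, abs_of_nonneg hcoef, abs_of_pos hab]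
    _ ≤ |a| ^ k * δ + (1 - a ^ k) / (1 - a) * ((1 - |a|) * δ) := by gcongr
    _ ≤ |a| ^ k * δ + (1 - |a| ^ k) * δ := by
      rw [← mul_assoc]
      gcongr _ + ?_ * δ
      rw [div_mul_eq_mul_div, div_le_iff₀ h1a]
      exact one_sub_pow_mul_one_sub_abs_le ha.le k
    _ = δ := by ring

theorem stmt_1_general (a b δ v x0 : ℝ) (x : ℕ → ℝ)
    (ha0 : -1 < a) (ha1 : a < 0) (hab : |a + b| < 1)
    (hx : ∀ k : ℕ, x k = a ^ k * x0 + b * v * (1 - a ^ k) / (1 - a))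
    (hx0 : |x0 - v| ≤ δ) (hv : |v| ≤ (1 - |a|) / (1 - (a + b)) * δ) :
    ∀ k : ℕ, |x k - v| ≤ δ := by
  intro k
  rw [hx k]
  exact abs_pow_mul_add_geom_sub_le (abs_lt.mpr ⟨ha0, by linarith⟩)
    (by linarith [(abs_lt.mp hab).2]) hx0 hv k

theorem stmt_1 (a b δ v x0 : ℝ) (x : ℕ → ℝ)
    (hδ : 0 < δ) (ha0 : -1 < a) (ha1 : a < 0) (hab : |a + b| < 1)
    (hx : ∀ k : ℕ, x k = a ^ k * x0 + b * v * (1 - a ^ k) / (1 - a))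
    (hx0 : |x0 - v| ≤ δ) (hv : |v| ≤ (1 - |a|) / (1 - (a + b)) * δ) :
    ∀ k : ℕ, |x k - v| ≤ δ :=
  stmt_1_general a b δ v x0 x ha0 ha1 hab hx hx0 hv
end

section
/- Under the hypotheses of the local stability region (|a| < 1, |a+b| < 1, |x(0) - v| ≤ δ, |v| ≤ ((1-|a|)/(1-(a+b)))δ), the sequence x(k) = a^k x(0) + b v (1-a^k)/(1-a) converges as k → ∞ to the point (b/(1-a)) v, which satisfies |(b/(1-a)) v - v| ≤ δ. -/
open Filter Topology

theorem tendsto_pow_mul_add_geom_sum {a : ℝ} (ha : |a| < 1) (x₀ c : ℝ) :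
    Tendsto (fun k : ℕ => a ^ k * x₀ + c * (1 - a ^ k) / (1 - a)) atTop (𝓝 (c / (1 - a))) := by
  have hpow : Tendsto (fun k : ℕ => a ^ k) atTop (𝓝 0) :=
    tendsto_pow_atTop_nhds_zero_of_abs_lt_one ha
  simpa using (hpow.mul_const x₀).add
    ((((tendsto_const_nhds (x := (1 : ℝ))).sub hpow).const_mul c).div_const (1 - a))

theorem abs_div_one_sub_mul_sub_self {a b : ℝ} (ha : a < 1) (hab : a + b < 1) (v : ℝ) :
    |b / (1 - a) * v - v| = (1 - (a + b)) / (1 - a) * |v| := by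
  have h1a : 0 < 1 - a := sub_pos.2 ha
  have hfactor : b / (1 - a) * v - v = -((1 - (a + b)) / (1 - a)) * v := by
    field_simp
    ring
  rw [hfactor, abs_mul, abs_neg, abs_of_pos (div_pos (sub_pos.2 hab) h1a)]

theorem abs_div_one_sub_mul_sub_self_le {a b v δ : ℝ} (ha : |a| < 1) (hab : a + b < 1)
    (hv : |v| ≤ (1 - |a|) / (1 - (a + b)) * δ) : |b / (1 - a) * v - v| ≤ δ := by
  have ha1 : a < 1 := (abs_lt.1 ha).2
  have h1a : 0 < 1 - a := sub_pos.2 ha1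
  have h1ab : 0 < 1 - (a + b) := sub_pos.2 hab
  have hδ : 0 ≤ δ := (mul_nonneg_iff_of_pos_left (div_pos (sub_pos.2 ha) h1ab)).1
    ((abs_nonneg v).trans hv)
  calc |b / (1 - a) * v - v| = (1 - (a + b)) / (1 - a) * |v| :=
        abs_div_one_sub_mul_sub_self ha1 hab v
    _ ≤ (1 - (a + b)) / (1 - a) * ((1 - |a|) / (1 - (a + b)) * δ) := by gcongr
    _ = (1 - |a|) / (1 - a) * δ := by field_simp
    _ ≤ 1 * δ := by
        gcongr
        exact (div_le_one h1a).2 (by linarith [le_abs_self a])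
    _ = δ := one_mul δ

theorem stmt_2_general (a b δ v x0 : ℝ) (x : ℕ → ℝ)
    (ha : |a| < 1) (hab : |a + b| < 1)
    (hx : ∀ k : ℕ, x k = a ^ k * x0 + b * v * (1 - a ^ k) / (1 - a))
    (hv : |v| ≤ (1 - |a|) / (1 - (a + b)) * δ) :
    Filter.Tendsto x Filter.atTop (nhds (b / (1 - a) * v)) ∧
      |b / (1 - a) * v - v| ≤ δ := by
  refine ⟨?_, abs_div_one_sub_mul_sub_self_le ha (abs_lt.1 hab).2 hv⟩
  rw [funext hx, div_mul_eq_mul_div]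
  exact tendsto_pow_mul_add_geom_sum ha x0 (b * v)

theorem stmt_2 (a b δ v x0 : ℝ) (x : ℕ → ℝ)
    (hδ : 0 < δ) (ha : |a| < 1) (hab : |a + b| < 1)
    (hx : ∀ k : ℕ, x k = a ^ k * x0 + b * v * (1 - a ^ k) / (1 - a))
    (hx0 : |x0 - v| ≤ δ) (hv : |v| ≤ (1 - |a|) / (1 - (a + b)) * δ) :
    Filter.Tendsto x Filter.atTop (nhds (b / (1 - a) * v)) ∧
      |b / (1 - a) * v - v| ≤ δ :=
  stmt_2_general a b δ v x0 x ha hab hx hv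
end

section
/- Let |a+b| < 1 and let sequences x, v satisfy x(k+1) = a x(k) + b v(k) where for each k, either v(k) = x(k) or |v(k) - x(k)| ≤ δ. Then for all n ≥ 1, |x(n)| ≤ |a+b|^n |x(0)| + ((1-|a+b|^n)/(1-|a+b|)) |b| δ. Consequently limsup_{n→∞} |x(n)| ≤ (|b|/(1-|a+b|)) δ. -/
theorem stmt_3 (a b δ : ℝ) (x v : ℕ → ℝ)
    (hδ : 0 < δ) (hab : |a + b| < 1)
    (hdyn : ∀ k : ℕ, x (k + 1) = a * x k + b * v k)
    (hcon : ∀ k : ℕ, |v k - x k| ≤ δ) :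
    (∀ n : ℕ, 1 ≤ n →
      |x n| ≤ |a + b| ^ n * |x 0| + (1 - |a + b| ^ n) / (1 - |a + b|) * |b| * δ) ∧
    Filter.atTop.limsup (fun n => |x n|) ≤ |b| / (1 - |a + b|) * δ := by
  set c := |a + b| with hc
  have hc0 : 0 ≤ c := abs_nonneg _
  have h1c : 0 < 1 - c := by linarith
  have step : ∀ k, |x (k + 1)| ≤ c * |x k| + |b| * δ := by
    intro k
    have : x (k + 1) = (a + b) * x k + b * (v k - x k) := by rw [hdyn k]; ring
    calc |x (k + 1)| = |(a + b) * x k + b * (v k - x k)| := by rw [this]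
      _ ≤ |(a + b) * x k| + |b * (v k - x k)| := abs_add_le _ _
      _ = c * |x k| + |b| * |v k - x k| := by rw [abs_mul, abs_mul]
      _ ≤ c * |x k| + |b| * δ := by
          have := hcon k
          nlinarith [abs_nonneg b]
  have main : ∀ n : ℕ, |x n| ≤ c ^ n * |x 0| + (1 - c ^ n) / (1 - c) * |b| * δ := by
    intro n
    induction n with
    | zero => simp
    | succ n ih =>
      have h2 := step n
      have hpow : (0:ℝ) ≤ c ^ n := pow_nonneg hc0 n
      have hkey : c * ((1 - c ^ n) / (1 - c)) + 1 = (1 - c ^ (n+1)) / (1 - c) := by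
        field_simp; ring
      calc |x (n+1)| ≤ c * |x n| + |b| * δ := h2
        _ ≤ c * (c ^ n * |x 0| + (1 - c ^ n) / (1 - c) * |b| * δ) + |b| * δ := by
            nlinarith [abs_nonneg b]
        _ = c ^ (n+1) * |x 0| + (c * ((1 - c ^ n) / (1 - c)) + 1) * |b| * δ := by ring
        _ = c ^ (n+1) * |x 0| + (1 - c ^ (n+1)) / (1 - c) * |b| * δ := by rw [hkey]
  constructor
  · intro n _; exact main n
  · have hle : ∀ n, |x n| ≤ c ^ n * |x 0| + |b| / (1 - c) * δ := by
      intro n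
      have := main n
      have hpow1 : c ^ n ≤ 1 := pow_le_one₀ hc0 hab.le
      have hpow0 : (0:ℝ) ≤ c ^ n := pow_nonneg hc0 n
      have : (1 - c ^ n) / (1 - c) * |b| * δ ≤ |b| / (1 - c) * δ := by
        rw [div_mul_eq_mul_div, div_mul_eq_mul_div, div_mul_eq_mul_div,
          div_le_div_iff₀ h1c h1c]
        have key : 0 ≤ |b| * δ * (1 - c) * c ^ n :=
          mul_nonneg (mul_nonneg (mul_nonneg (abs_nonneg b) hδ.le) h1c.le) hpow0
        have e : (1 - c ^ n) * |b| * δ * (1 - c)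
            = |b| * δ * (1 - c) - |b| * δ * (1 - c) * c ^ n := by ring
        linarith
      linarith
    have htend : Filter.Tendsto (fun n => c ^ n * |x 0| + |b| / (1 - c) * δ)
        Filter.atTop (nhds (0 * |x 0| + |b| / (1 - c) * δ)) := by
      exact ((tendsto_pow_atTop_nhds_zero_of_lt_one hc0 hab).mul_const _).add_const _
    have hlimg : Filter.atTop.limsup (fun n => c ^ n * |x 0| + |b| / (1 - c) * δ)
        = |b| / (1 - c) * δ := by
      rw [htend.limsup_eq]; ring
    calc Filter.atTop.limsup (fun n => |x n|)
        ≤ Filter.atTop.limsup (fun n => c ^ n * |x 0| + |b| / (1 - c) * δ) := by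
          exact Filter.limsup_le_limsup (Filter.Eventually.of_forall hle)
            (hu := Filter.isCoboundedUnder_le_of_le Filter.atTop (fun n => abs_nonneg (x n)))
            (hv := htend.isBoundedUnder_le)
      _ = |b| / (1 - c) * δ := hlimg
end

section
/- If |a+b| < 1, |x(0)| ≤ (|b|/(1-|a+b|))δ, and the sequence satisfies x(k+1) = a x(k) + b v(k) with |v(k) - x(k)| ≤ δ for all k, then |x(n)| ≤ (|b|/(1-|a+b|))δ for all n ≥ 1 (positive invariance of the attracting interval). -/
theorem stmt_4 (a b δ : ℝ) (x v : ℕ → ℝ)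
    (hδ : 0 < δ) (hab : |a + b| < 1)
    (hx0 : |x 0| ≤ |b| / (1 - |a + b|) * δ)
    (hdyn : ∀ k : ℕ, x (k + 1) = a * x k + b * v k)
    (hcon : ∀ k : ℕ, |v k - x k| ≤ δ) :
    ∀ n : ℕ, 1 ≤ n → |x n| ≤ |b| / (1 - |a + b|) * δ := by
  have h1 : 0 < 1 - |a + b| := by linarith
  have key : ∀ n : ℕ, |x n| ≤ |b| / (1 - |a + b|) * δ := by
    intro n
    induction n with
    | zero => exact hx0
    | succ k ih =>
      have hrw : x (k + 1) = (a + b) * x k + b * (v k - x k) := by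
        rw [hdyn k]; ring
      have := hcon k
      have hb : |b * (v k - x k)| ≤ |b| * δ := by
        rw [abs_mul]
        exact mul_le_mul_of_nonneg_left this (abs_nonneg b)
      calc |x (k + 1)| ≤ |(a + b) * x k| + |b * (v k - x k)| := by
            rw [hrw]; exact abs_add_le _ _
        _ ≤ |a + b| * (|b| / (1 - |a + b|) * δ) + |b| * δ := by
            rw [abs_mul]
            exact add_le_add (mul_le_mul_of_nonneg_left ih (abs_nonneg _)) hb
        _ = |b| / (1 - |a + b|) * δ := by field_simp; ring
  intro n _; exact key n
end

section
/- Let p be a positive integer and q_i a prime with gcd(p, q_i) = 1. If positive integers m, n satisfy 1/m + 1/n = p/q_i and gcd(m, q_i) = 1, then q_i divides n, and in fact m = (q_i + 1)/p and n = m·q_i; in particular p divides q_i + 1. -/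
theorem stmt_13 (p m n qi : ℕ)
    (hp : 0 < p) (hm : 0 < m) (hn : 0 < n)
    (hqi : Nat.Prime qi) (hpqi : Nat.gcd p qi = 1) (hmqi : Nat.gcd m qi = 1)
    (heq : (1 : ℚ) / m + 1 / n = (p : ℚ) / qi) :
    qi ∣ n ∧ m * p = qi + 1 ∧ n = m * qi ∧ p ∣ (qi + 1) := by
  have hq0 : (qi : ℚ) ≠ 0 := Nat.cast_ne_zero.2 hqi.pos.ne'
  have hm0 : (m : ℚ) ≠ 0 := Nat.cast_ne_zero.2 hm.ne'
  have hn0 : (n : ℚ) ≠ 0 := Nat.cast_ne_zero.2 hn.ne'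
  have key : qi * (n + m) = p * m * n := by
    have h : ((qi * (n + m) : ℕ) : ℚ) = ((p * m * n : ℕ) : ℚ) := by
      field_simp at heq
      push_cast
      linear_combination heq
    exact_mod_cast h
  have hcop : Nat.Coprime qi p := Nat.Coprime.symm hpqi
  have hcopm : Nat.Coprime qi m := Nat.Coprime.symm hmqi
  have hdvdn : qi ∣ n := by
    have h1 : qi ∣ p * m * n := ⟨n + m, key.symm⟩
    have h2 : qi ∣ m * n := (Nat.Coprime.dvd_of_dvd_mul_left hcop (by
      rwa [show p * m * n = p * (m * n) by ring] at h1))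
    exact Nat.Coprime.dvd_of_dvd_mul_left hcopm h2
  obtain ⟨k, hk⟩ := hdvdn
  have hk0 : 0 < k := Nat.pos_of_ne_zero (by rintro rfl; simp at hk; omega)
  subst hk
  have e : qi * k + m = p * m * k :=
    Nat.eq_of_mul_eq_mul_left hqi.pos (by zify at key ⊢; linear_combination key)
  have hmk : m ∣ k := by
    have h1 : m ∣ qi * k := by
      have h2 : m ∣ p * m * k := ⟨p * k, by ring⟩
      have h3 : qi * k = p * m * k - m := by omega
      rw [h3]; exact Nat.dvd_sub h2 dvd_rfl
    exact (Nat.Coprime.symm hcopm).dvd_of_dvd_mul_left h1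
  have hkm : k ∣ m := by
    have h1 : k ∣ p * m * k := ⟨p * m, by ring⟩
    have h2 : k ∣ qi * k := ⟨qi, by ring⟩
    have h3 : m = p * m * k - qi * k := by omega
    rw [h3]; exact Nat.dvd_sub h1 h2
  have hkeq : k = m := Nat.dvd_antisymm hkm hmk
  subst hkeq
  have hmp : k * p = qi + 1 := by
    have h : k * (qi + 1) = k * (k * p) := by zify at e ⊢; linear_combination e
    exact (Nat.eq_of_mul_eq_mul_left hk0 h).symm
  exact ⟨⟨k, rfl⟩, hmp, mul_comm qi k, ⟨k, by rw [← hmp, mul_comm]⟩⟩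
end
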